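/- arXiv:2207.01589 — 4 statements merged into one kernel-verified Lean document; each statement's English description precedes it below -/
import Mathlib

section
/- Let I be a repeated matching instance with constant valuations, i.e., for every agent i and item g, v_i(g,1) = v_i(g,2) = ... = v_i(g,T) = v_i(g). Then for every repeated matching A = (A^1,...,A^T) of I there exists a round t ∈ {1,...,T} such that the repeated matching that uses the bijection A^t in all T rounds has social welfare at least SW(A). -/
open Finset

/-- The number of rounds in which agent `i` is matched to item `g`
under the repeated matching `A` (a sequence of `T` bijections from agents to items). -/
def mult {α β : Type*} [DecidableEq β] {T : ℕ} (A : Fin T → α ≃ β) (i : α) (g : β) : ℕ :=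
  (Finset.univ.filter fun t : Fin T => A t i = g).card

/-- The value of a bundle with multiplicities `B` under the valuation `v`,
where `v g t` is the value of the `t`-th copy of item `g`. -/
def bundleValue {β : Type*} [Fintype β] (v : β → ℕ → ℝ) (B : β → ℕ) : ℝ :=
  ∑ g : β, ∑ t ∈ Finset.range (B g), v g (t + 1)

/-- The social welfare of a repeated matching. -/
def SW {α β : Type*} [Fintype α] [Fintype β] [DecidableEq β] {T : ℕ}
    (v : α → β → ℕ → ℝ) (A : Fin T → α ≃ β) : ℝ :=
  ∑ i : α, bundleValue (v i) (mult A i)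

/-- Remove one copy of `g` from the bundle `B` (if present; otherwise leave `B` intact). -/
def removeOne {β : Type*} [DecidableEq β] (B : β → ℕ) (g : β) : β → ℕ :=
  fun g' => if g' = g then B g' - 1 else B g'

/-- `EF1`: every agent `i` values her bundle at least as much as any other agent `j`'s
bundle after removing one copy of some item. -/
def EF1 {α β : Type*} [Fintype β] [DecidableEq β] {T : ℕ}
    (v : α → β → ℕ → ℝ) (A : Fin T → α ≃ β) : Prop :=
  ∀ i j : α, ∃ g : β,
    bundleValue (v i) (mult A i) ≥ bundleValue (v i) (removeOne (mult A j) g)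

/-!
With constant valuations each copy of an item is worth the same, so the social welfare of a
repeated matching is the sum over rounds of the welfare of the single-round matchings. Repeating
a round of maximal welfare `T` times is therefore at least as good as the average.
-/

section ConstantValuations

variable {α β : Type*} {T : ℕ}

theorem bundleValue_eq_sum_mul_of_const [Fintype β] (v : β → ℕ → ℝ) (B : β → ℕ)
    (hv : ∀ g t, 1 ≤ t → t ≤ B g → v g t = v g 1) :
    bundleValue v B = ∑ g, (B g : ℝ) * v g 1 := by
  refine Finset.sum_congr rfl fun g _ => ?_
  rw [Finset.sum_congr rfl fun t ht => hv g (t + 1) (by omega) (by simpa using ht),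
    Finset.sum_const, Finset.card_range, nsmul_eq_mul]

theorem mult_le [DecidableEq β] (A : Fin T → α ≃ β) (i : α) (g : β) : mult A i g ≤ T :=
  (Finset.card_filter_le _ _).trans_eq (Finset.card_fin T)

theorem sum_mult_mul [Fintype β] [DecidableEq β] (A : Fin T → α ≃ β) (i : α) (f : β → ℝ) :
    ∑ g, (mult A i g : ℝ) * f g = ∑ t, f (A t i) := by
  rw [← Finset.sum_fiberwise Finset.univ (fun t => A t i)]
  refine Finset.sum_congr rfl fun g _ => ?_
  rw [Finset.sum_congr rfl fun t ht => by rw [(Finset.mem_filter.mp ht).2], Finset.sum_const,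
    nsmul_eq_mul]
  rfl

theorem SW_eq_sum_rounds_of_const [Fintype α] [Fintype β] [DecidableEq β]
    (v : α → β → ℕ → ℝ) (hv : ∀ i g t, 1 ≤ t → t ≤ T → v i g t = v i g 1) (A : Fin T → α ≃ β) :
    SW v A = ∑ t, ∑ i, v i (A t i) 1 := by
  rw [SW, Finset.sum_comm]
  refine Finset.sum_congr rfl fun i _ => ?_
  rw [bundleValue_eq_sum_mul_of_const (v i) (mult A i)
      fun g t h1 h2 => hv i g t h1 (h2.trans (mult_le A i g)),
    sum_mult_mul A i fun g => v i g 1]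

theorem SW_const_eq_of_const [Fintype α] [Fintype β] [DecidableEq β]
    (v : α → β → ℕ → ℝ) (hv : ∀ i g t, 1 ≤ t → t ≤ T → v i g t = v i g 1) (σ : α ≃ β) :
    SW v (fun _ : Fin T => σ) = T * ∑ i, v i (σ i) 1 := by
  rw [SW_eq_sum_rounds_of_const v hv, Finset.sum_const, Finset.card_fin, nsmul_eq_mul]

end ConstantValuations

/-- With constant valuations, for every repeated matching `A` there is a round `t`
such that repeating the single-round matching `A t` in all rounds has at least as
high social welfare as `A`. -/
theorem stmt2 (n T : ℕ) (hT : 0 < T) (v : Fin n → Fin n → ℕ → ℝ)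
    (hconst : ∀ (i g : Fin n) (t t' : ℕ),
      1 ≤ t → t ≤ T → 1 ≤ t' → t' ≤ T → v i g t = v i g t')
    (A : Fin T → Fin n ≃ Fin n) :
    ∃ t : Fin T, SW v A ≤ SW v (fun _ : Fin T => A t) := by
  have hv : ∀ i g t, 1 ≤ t → t ≤ T → v i g t = v i g 1 :=
    fun i g t h1 h2 => hconst i g t 1 h1 h2 le_rfl hT
  set w : Fin T → ℝ := fun t => ∑ i, v i (A t i) 1
  have : Nonempty (Fin T) := ⟨⟨0, hT⟩⟩
  obtain ⟨t, -, ht⟩ := Finset.exists_max_image Finset.univ w Finset.univ_nonempty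
  refine ⟨t, ?_⟩
  rw [SW_eq_sum_rounds_of_const v hv, SW_const_eq_of_const v hv]
  simpa using Finset.sum_le_card_nsmul Finset.univ w (w t) fun s _ => ht s (Finset.mem_univ s)
end

section
/- Let I be a repeated matching instance with n agents/items and T rounds in which all agents have the same valuation function v (identical valuations) and v(g,t) ≥ 0 for all items g and t ∈ {1,...,T}. Then there exists a repeated matching of I that is EF1. -/
open Finset

/-! Write `T = q * n + r` with `0 < r ≤ n`. In the first `q * n` rounds cyclic shifts give every
agent exactly `q` copies of every item, so only the last `r` rounds matter, and there every item
is worth `w g = v g (q + 1)`. Sort the items by `w` and let the agents draft them round-robin,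
each item supplying `r` consecutive picks: agent `i`'s `l`-th pick is then at least as good as
agent `j`'s `(l + 1)`-st, which gives EF1 after removing `j`'s first pick. Every agent gets `r`
distinct items and every item goes to `r` agents, so by Hall's theorem the picks split into `r`
perfect matchings. -/

section RepeatedMatching

variable {α β : Type*} [DecidableEq β]

lemma mult_eq_sum {T : ℕ} (A : Fin T → α ≃ β) (i : α) (g : β) :
    mult A i g = ∑ t, if A t i = g then 1 else 0 :=
  card_filter _ _

lemma mult_append {m k : ℕ} (A : Fin m → α ≃ β) (B : Fin k → α ≃ β) (i : α) (g : β) :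
    mult (Fin.append A B) i g = mult A i g + mult B i g := by
  simp only [mult_eq_sum, Fin.sum_univ_add, Fin.append_left, Fin.append_right]

lemma mult_cons {m : ℕ} (e : α ≃ β) (A : Fin m → α ≃ β) (i : α) (g : β) :
    mult (Fin.cons e A : Fin (m + 1) → α ≃ β) i g = (if e i = g then 1 else 0) + mult A i g := by
  simp only [mult_eq_sum, Fin.sum_univ_succ, Fin.cons_zero, Fin.cons_succ]

lemma mult_repeat {m : ℕ} (q : ℕ) (A : Fin m → α ≃ β) (i : α) (g : β) :
    mult (Fin.repeat q A) i g = q * mult A i g := by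
  rw [mult_eq_sum, mult_eq_sum, Fintype.sum_equiv finProdFinEquiv.symm
    (fun t => if Fin.repeat q A t i = g then 1 else 0)
    (fun p => if A p.2 i = g then 1 else 0) fun _ => rfl, Fintype.sum_prod_type]
  simp

end RepeatedMatching

lemma mult_addRight_eq_one {n : ℕ} [NeZero n] (i g : Fin n) :
    mult (fun t : Fin n => Equiv.addRight t) i g = 1 := by
  simp [mult, ← eq_sub_iff_add_eq', Finset.filter_eq']

section RegularFamily

variable {α β : Type*} [Fintype α] [DecidableEq β]

/-- `E` lists the neighbourhoods of an `r`-regular bipartite graph between `α` and `β`. -/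
def IsRegularFamily (E : α → Finset β) (r : ℕ) : Prop :=
  (∀ i, #(E i) = r) ∧ ∀ g, #{i | g ∈ E i} = r

lemma IsRegularFamily.exists_equiv_forall_mem [Fintype β] {E : α → Finset β} {r : ℕ}
    (hE : IsRegularFamily E r) (hr : 0 < r) (hcard : Fintype.card α = Fintype.card β) :
    ∃ e : α ≃ β, ∀ i, e i ∈ E i := by
  have hall : ∀ s : Finset α, #s ≤ #(s.biUnion E) := by
    intro s
    -- `r * #s` edges leave `s`, and each vertex of its neighbourhood receives at most `r` of them
    refine Nat.le_of_mul_le_mul_right (card_mul_le_card_mul (fun i g => g ∈ E i) ?_ ?_) hr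
    · intro i hi
      rw [bipartiteAbove, filter_mem_eq_inter, inter_eq_right.mpr (subset_biUnion_of_mem E hi),
        hE.1 i]
    · intro g _
      rw [← hE.2 g]
      exact card_le_card (filter_subset_filter _ (subset_univ s))
  obtain ⟨f, hf, hfE⟩ := (all_card_le_biUnion_card_iff_exists_injective E).mp hall
  exact ⟨Equiv.ofBijective f ((Fintype.bijective_iff_injective_and_card f).mpr ⟨hf, hcard⟩), hfE⟩

lemma IsRegularFamily.erase_equiv [DecidableEq α] {E : α → Finset β} {r : ℕ}
    (hE : IsRegularFamily E (r + 1)) (e : α ≃ β) (he : ∀ i, e i ∈ E i) :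
    IsRegularFamily (fun i => (E i).erase (e i)) r := by
  refine ⟨fun i => by rw [card_erase_of_mem (he i), hE.1 i, Nat.add_sub_cancel], fun g => ?_⟩
  have hfilter : ({i | g ∈ (E i).erase (e i)} : Finset α) =
      ({i | g ∈ E i} : Finset α).erase (e.symm g) := by
    ext i
    simp [Equiv.eq_symm_apply, eq_comm (a := g), and_comm]
  rw [hfilter, card_erase_of_mem (by simpa using he (e.symm g)), hE.2 g, Nat.add_sub_cancel]

theorem IsRegularFamily.exists_mult_eq_indicator [Fintype β] [DecidableEq α]
    (hcard : Fintype.card α = Fintype.card β) :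
    ∀ {r : ℕ} {E : α → Finset β}, IsRegularFamily E r →
      ∃ σ : Fin r → α ≃ β, ∀ i g, mult σ i g = if g ∈ E i then 1 else 0
  | 0, E, hE => ⟨Fin.elim0, fun i g => by simp [mult, card_eq_zero.mp (hE.1 i)]⟩
  | r + 1, E, hE => by
    obtain ⟨e, he⟩ := hE.exists_equiv_forall_mem r.succ_pos hcard
    obtain ⟨σ, hσ⟩ := (hE.erase_equiv e he).exists_mult_eq_indicator hcard
    refine ⟨Fin.cons e σ, fun i g => ?_⟩
    rw [mult_cons, hσ]
    by_cases h : e i = g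
    · subst h
      simp [he i]
    · simp [h, Ne.symm h]

end RegularFamily

section RoundRobin

variable {n r : ℕ}

/-- Agents pick in the order `0, …, n - 1`, `r` times over, and slot `l * n + i` (the `l`-th pick
of agent `i`) gets the item in sorted position `(l * n + i) / r`. -/
def pick (i : Fin n) (l : Fin r) : Fin n :=
  ⟨(l * n + i) / r, by
    rw [Nat.div_lt_iff_lt_mul l.pos]
    nlinarith [l.isLt, i.isLt]⟩

lemma pick_strictMono (hrn : r ≤ n) (i : Fin n) : StrictMono (pick (r := r) i) := by
  intro l l' hll'
  change (l * n + i : ℕ) / r < (l' * n + i) / r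
  calc (l * n + i : ℕ) / r < (l * n + i + r) / r := by
        rw [Nat.add_div_right _ l.pos]; exact Nat.lt_succ_self _
    _ ≤ (l' * n + i) / r := by
        apply Nat.div_le_div_right
        nlinarith [Fin.lt_def.mp hll']

lemma pick_castSucc_le_pick_succ {m : ℕ} (i j : Fin n) (k : Fin m) :
    pick i k.castSucc ≤ pick j k.succ := by
  change (k * n + i : ℕ) / (m + 1) ≤ ((k + 1) * n + j) / (m + 1)
  apply Nat.div_le_div_right
  rw [Nat.succ_mul]
  omega

lemma card_filter_exists_pick_eq (hrn : r ≤ n) (p : Fin n) :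
    #{i | ∃ l : Fin r, pick i l = p} = r := by
  have hn : 0 < n := p.pos
  let slotAgent (k : Fin r) : Fin n := ⟨(p * r + k) % n, Nat.mod_lt _ hn⟩
  have hinj : Function.Injective slotAgent := by
    intro k k' h
    have h' : (k : ℕ) % n = k' % n := Nat.ModEq.add_left_cancel' _ (Fin.val_eq_of_eq h)
    rwa [Nat.mod_eq_of_lt (k.isLt.trans_le hrn), Nat.mod_eq_of_lt (k'.isLt.trans_le hrn),
      ← Fin.ext_iff] at h'
  suffices ({i | ∃ l : Fin r, pick i l = p} : Finset (Fin n)) = univ.image slotAgent by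
    rw [this, card_image_of_injective _ hinj, card_fin]
  ext i
  simp only [mem_filter, mem_univ, true_and, mem_image, Fin.ext_iff, pick, slotAgent]
  constructor
  · rintro ⟨l, hl⟩
    have hslot : p * r + (l * n + i) % r = l * n + i := by
      rw [← hl, mul_comm]; exact Nat.div_add_mod _ r
    refine ⟨⟨(l * n + i) % r, Nat.mod_lt _ l.pos⟩, ?_⟩
    rw [hslot, Nat.mul_add_mod_of_lt i.isLt]
  · rintro ⟨k, hk⟩
    have hr : 0 < r := k.pos
    have hslot : (p * r + k) / n * n + i = p * r + k := by
      rw [← hk]; exact Nat.div_add_mod' _ n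
    refine ⟨⟨(p * r + k) / n, ?_⟩, ?_⟩
    · rw [Nat.div_lt_iff_lt_mul hn]
      nlinarith [p.isLt, k.isLt]
    · rw [hslot, mul_comm, Nat.mul_add_div hr, Nat.div_eq_of_lt k.isLt, add_zero]

lemma isRegularFamily_image_pick (hrn : r ≤ n) (ρ : Fin n ≃ Fin n) :
    IsRegularFamily (fun i => univ.image fun l : Fin r => ρ (pick i l)) r := by
  refine ⟨fun i => ?_, fun g => ?_⟩
  · exact (card_image_of_injective _
      (ρ.injective.comp (pick_strictMono hrn i).injective)).trans (card_fin r)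
  · simp only [mem_image, mem_univ, true_and, ← Equiv.eq_symm_apply]
    exact card_filter_exists_pick_eq hrn _

end RoundRobin

lemma Fin.sum_le_head_add_sum_of_succ_le {M : Type*} [AddCommMonoid M] [PartialOrder M]
    [IsOrderedAddMonoid M] {m : ℕ} (f g : Fin (m + 1) → M)
    (hgf : ∀ k : Fin m, g k.succ ≤ f k.castSucc) (hf : 0 ≤ f (Fin.last m)) :
    ∑ k, g k ≤ g 0 + ∑ k, f k := by
  rw [Fin.sum_univ_succ g, Fin.sum_univ_castSucc f]
  gcongr
  exact le_add_of_le_of_nonneg (sum_le_sum fun k _ => hgf k) hf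

section BundleValue

variable {β : Type*} [DecidableEq β]

lemma bundleValue_const_add_indicator [Fintype β] (v : β → ℕ → ℝ) (q : ℕ) (E : Finset β) :
    bundleValue v (fun g => q + if g ∈ E then 1 else 0) =
      bundleValue v (fun _ => q) + ∑ g ∈ E, v g (q + 1) := by
  have hsplit (g : β) : ∑ t ∈ range (q + if g ∈ E then 1 else 0), v g (t + 1) =
      ∑ t ∈ range q, v g (t + 1) + if g ∈ E then v g (q + 1) else 0 := by
    split_ifs <;> simp [sum_range_succ]
  simp only [bundleValue, hsplit, sum_add_distrib, sum_ite_mem, univ_inter]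

lemma removeOne_const_add_indicator {E : Finset β} {g : β} (hg : g ∈ E) (q : ℕ) :
    removeOne (fun g' => q + if g' ∈ E then 1 else 0) g =
      fun g' => q + if g' ∈ E.erase g then 1 else 0 := by
  funext g'
  by_cases h : g' = g
  · subst h
    simp [removeOne, hg]
  · simp [removeOne, h]

end BundleValue

theorem exists_EF1_mul_add {n q r : ℕ} [NeZero n] (hr : 0 < r) (hrn : r ≤ n)
    (v : Fin n → ℕ → ℝ) (hv : ∀ g, 0 ≤ v g (q + 1)) :
    ∃ A : Fin (q * n + r) → Fin n ≃ Fin n, EF1 (fun _ : Fin n => v) A := by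
  obtain ⟨m, rfl⟩ := Nat.exists_eq_add_one_of_ne_zero hr.ne'
  let w (g : Fin n) : ℝ := v g (q + 1)
  let ρ := Tuple.sort (OrderDual.toDual ∘ w)
  have hρ : Antitone (w ∘ ρ) :=
    monotone_toDual_comp_iff.mp (Tuple.monotone_sort (OrderDual.toDual ∘ w))
  let E (i : Fin n) : Finset (Fin n) := univ.image fun l : Fin (m + 1) => ρ (pick i l)
  obtain ⟨σ, hσ⟩ := (isRegularFamily_image_pick hrn ρ).exists_mult_eq_indicator rfl
  let A := Fin.append (Fin.repeat q fun t : Fin n => Equiv.addRight t) σ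
  have hA (i : Fin n) : mult A i = fun g => q + if g ∈ E i then 1 else 0 := by
    funext g
    rw [mult_append, mult_repeat, mult_addRight_eq_one, mul_one, hσ]
  have hvalue (i : Fin n) : ∑ g ∈ E i, w g = ∑ l, w (ρ (pick i l)) :=
    sum_image fun _ _ _ _ h => (pick_strictMono hrn i).injective (ρ.injective h)
  refine ⟨A, fun i j => ⟨ρ (pick j (0 : Fin (m + 1))), ?_⟩⟩
  have hmem : ρ (pick j (0 : Fin (m + 1))) ∈ E j := mem_image_of_mem _ (mem_univ 0)
  rw [hA, hA, removeOne_const_add_indicator hmem, bundleValue_const_add_indicator,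
    bundleValue_const_add_indicator, sum_erase_eq_sub hmem, ge_iff_le, add_le_add_iff_left,
    sub_le_iff_le_add', hvalue, hvalue]
  exact Fin.sum_le_head_add_sum_of_succ_le _ _
    (fun k => hρ (pick_castSucc_le_pick_succ i j k)) (hv _)

/-- For identical non-negative valuations, an EF1 repeated matching exists. -/
theorem stmt4 (n T : ℕ) (v : Fin n → ℕ → ℝ)
    (hnonneg : ∀ (g : Fin n) (t : ℕ), 1 ≤ t → t ≤ T → 0 ≤ v g t) :
    ∃ A : Fin T → Fin n ≃ Fin n, EF1 (fun _ : Fin n => v) A := by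
  rcases Nat.eq_zero_or_pos n with rfl | hn
  · exact ⟨fun _ => Equiv.refl _, fun i => i.elim0⟩
  rcases Nat.eq_zero_or_pos T with rfl | hT
  · exact ⟨Fin.elim0, fun i _ => ⟨i, by simp [mult, removeOne, bundleValue]⟩⟩
  have : NeZero n := ⟨hn.ne'⟩
  obtain ⟨q, r, rfl, hr, hrn⟩ : ∃ q r, T = q * n + r ∧ 0 < r ∧ r ≤ n :=
    ⟨(T - 1) / n, (T - 1) % n + 1, by have := Nat.div_add_mod' (T - 1) n; omega,
      Nat.succ_pos _, Nat.mod_lt _ hn⟩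
  exact exists_EF1_mul_add hr hrn v fun g =>
    hnonneg g (q + 1) le_add_self (by nlinarith)
end

section
/- Let G = (V,E) be a finite graph with no isolated vertices, let 0 < δ < |V|^{−2}, and construct the repeated matching instance I(G) with T = |V| rounds and n = (2|V|+1)|E| + 1 agents as follows. The agents are 'edge agents' (e,i) for each e ∈ E and i ∈ {1,...,2|V|+1}, plus one 'special agent' s. The items are one 'node item' g_u for each u ∈ V, plus n − |V| 'dummy items'. Valuations: for every edge e = (x,y), every i, every u ∈ V, and every t, v_{(e,i)}(g_u,t) = δ if u ∈ {x,y} and 0 otherwise; v_s(g_u,t) = 1 for every u ∈ V and t; all agents value every copy of every dummy item at 0. Then in every repeated matching A of I(G), for every edge e ∈ E there exists i ∈ {1,...,2|V|+1} such that the edge agent (e,i) has value 0, i.e., v_{(e,i)}(A_{(e,i)}) = 0. -/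
/-! Each item is handed out exactly once per round, so at most `T = |V|` times in total. The
`2|V| + 1` agents of an edge `{x, y}` therefore share at most `2|V|` copies of `g_x` and `g_y`;
by pigeonhole one of them receives neither, and she values everything else at `0`. -/

open Finset

/-- The valuation in the instance `I(G)` constructed from a graph `G`:
agents are pairs (edge, copy-index in `Fin (2|V|+1)`) plus a special agent
(`Sum.inr ()`), items are node items (`Sum.inl u` for `u : V`) plus `N` dummy
items.  An edge agent values every copy of a node item of an endpoint of its edge
at `δ`, the special agent values every copy of every node item at `1`, and all
other values are `0`. -/
def graphVal {V : Type*} [Fintype V] [DecidableEq V] (G : SimpleGraph V)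
    [DecidableRel G.Adj] (δ : ℝ) (N : ℕ) :
    ((G.edgeFinset × Fin (2 * Fintype.card V + 1)) ⊕ Unit) → (V ⊕ Fin N) → ℕ → ℝ
  | Sum.inl ei, Sum.inl u, _ => if u ∈ (ei.1 : Sym2 V) then δ else 0
  | Sum.inr _, Sum.inl _, _ => 1
  | _, Sum.inr _, _ => 0

section RepeatedMatching

variable {α β : Type*} [Fintype α] [DecidableEq β] {T : ℕ}

theorem sum_mult_eq (A : Fin T → α ≃ β) (g : β) : ∑ i : α, mult A i g = T := by
  classical
  calc ∑ i : α, mult A i g = ∑ i : α, #{t | (A t).symm g = i} :=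
        Fintype.sum_congr _ _ fun i => congrArg card <| filter_congr fun t _ =>
          eq_comm.trans (A t).symm_apply_eq.symm
    _ = #(univ : Finset (Fin T)) := (card_eq_sum_card_fiberwise fun t _ => mem_univ _).symm
    _ = T := by rw [card_univ, Fintype.card_fin]

theorem sum_mult_comp_le {γ : Type*} [Fintype γ] (A : Fin T → α ≃ β) (g : β)
    {f : γ → α} (hf : Function.Injective f) : ∑ c : γ, mult A (f c) g ≤ T :=
  calc ∑ c : γ, mult A (f c) g = ∑ a ∈ univ.map ⟨f, hf⟩, mult A a g :=
        (sum_map univ ⟨f, hf⟩ fun a => mult A a g).symm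
    _ ≤ ∑ a : α, mult A a g := sum_le_sum_of_subset (subset_univ _)
    _ = T := sum_mult_eq A g

theorem exists_forall_mult_eq_zero {γ : Type*} [Fintype γ] (A : Fin T → α ≃ β) (S : Finset β)
    {f : γ → α} (hf : Function.Injective f) (hcard : #S * T < Fintype.card γ) :
    ∃ c : γ, ∀ g ∈ S, mult A (f c) g = 0 := by
  have htotal : ∑ c : γ, ∑ g ∈ S, mult A (f c) g < ∑ _c : γ, 1 :=
    calc ∑ c : γ, ∑ g ∈ S, mult A (f c) g = ∑ g ∈ S, ∑ c : γ, mult A (f c) g := sum_comm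
      _ ≤ ∑ _g ∈ S, T := sum_le_sum fun g _ => sum_mult_comp_le A g hf
      _ < ∑ _c : γ, 1 := by simpa using hcard
  obtain ⟨c, -, hc⟩ := exists_lt_of_sum_lt htotal
  exact ⟨c, sum_eq_zero_iff.mp (Nat.lt_one_iff.mp hc)⟩

end RepeatedMatching

theorem bundleValue_eq_zero {β : Type*} [Fintype β] {v : β → ℕ → ℝ} {B : β → ℕ}
    (h : ∀ g, B g ≠ 0 → ∀ t, v g t = 0) : bundleValue v B = 0 := by
  refine sum_eq_zero fun g _ => ?_
  by_cases hg : B g = 0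
  · simp [hg]
  · exact sum_eq_zero fun t _ => h g hg (t + 1)

theorem graphVal_edgeAgent_eq_zero {V : Type*} [Fintype V] [DecidableEq V] (G : SimpleGraph V)
    [DecidableRel G.Adj] (δ : ℝ) (N : ℕ) (ei : G.edgeFinset × Fin (2 * Fintype.card V + 1))
    {g : V ⊕ Fin N} (hg : g ∉ (ei.1 : Sym2 V).toFinset.map .inl) (t : ℕ) :
    graphVal G δ N (Sum.inl ei) g t = 0 := by
  rcases g with u | d
  · simp_all [graphVal]
  · rfl

theorem stmt10_general {V : Type*} [Fintype V] [DecidableEq V] (G : SimpleGraph V)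
    [DecidableRel G.Adj]
    (δ : ℝ)
    (N : ℕ)
    (A : Fin (Fintype.card V) →
      ((G.edgeFinset × Fin (2 * Fintype.card V + 1)) ⊕ Unit) ≃ (V ⊕ Fin N)) :
    ∀ e : G.edgeFinset, ∃ i : Fin (2 * Fintype.card V + 1),
      bundleValue (graphVal G δ N (Sum.inl (e, i))) (mult A (Sum.inl (e, i))) = 0 := by
  intro e
  let endpoints : Finset (V ⊕ Fin N) := (e : Sym2 V).toFinset.map .inl
  have hcard : #endpoints * Fintype.card V < Fintype.card (Fin (2 * Fintype.card V + 1)) := by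
    have hle : #endpoints ≤ 2 := by
      rw [card_map, Sym2.card_toFinset]
      split <;> omega
    rw [Fintype.card_fin]
    have := Nat.mul_le_mul_right (Fintype.card V) hle
    omega
  obtain ⟨i, hi⟩ := exists_forall_mult_eq_zero A endpoints
    (Sum.inl_injective.comp (Prod.mk_right_injective e)) hcard
  refine ⟨i, bundleValue_eq_zero fun g hg => graphVal_edgeAgent_eq_zero G δ N (e, i) ?_⟩
  exact fun hmem => hg (hi g hmem)

/-- In every repeated matching of the instance `I(G)` constructed from a graph `G`
with no isolated vertices, for every edge `e` there is a copy-index `i` such that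
the edge agent `(e, i)` has value `0` for her bundle. -/
theorem stmt10 {V : Type*} [Fintype V] [DecidableEq V] (G : SimpleGraph V)
    [DecidableRel G.Adj]
    (hiso : ∀ x : V, ∃ y : V, G.Adj x y)
    (δ : ℝ) (hδ0 : 0 < δ) (hδ1 : δ < 1 / (Fintype.card V : ℝ) ^ 2)
    (N : ℕ) (hN : N = (2 * Fintype.card V + 1) * G.edgeFinset.card + 1 - Fintype.card V)
    (A : Fin (Fintype.card V) →
      ((G.edgeFinset × Fin (2 * Fintype.card V + 1)) ⊕ Unit) ≃ (V ⊕ Fin N)) :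
    ∀ e : G.edgeFinset, ∃ i : Fin (2 * Fintype.card V + 1),
      bundleValue (graphVal G δ N (Sum.inl (e, i))) (mult A (Sum.inl (e, i))) = 0 :=
  stmt10_general G δ N A
end

section
/- Let G = (V,E) be a finite graph with no isolated vertices, let 0 < δ < |V|^{−2}, and construct the repeated matching instance I(G) with T = |V| rounds and n = (2|V|+1)|E| + 1 agents as follows. The agents are 'edge agents' (e,i) for each e ∈ E and i ∈ {1,...,2|V|+1}, plus one 'special agent' s. The items are one 'node item' g_u for each u ∈ V, plus n − |V| 'dummy items'. Valuations: for every edge e = (x,y), every i, every u ∈ V, and every t, v_{(e,i)}(g_u,t) = δ if u ∈ {x,y} and 0 otherwise; v_s(g_u,t) = 1 for every u ∈ V and t; all agents value every copy of every dummy item at 0. Then in every EF1 repeated matching A of I(G), for every edge e = (x,y) ∈ E the bundle A_s of the special agent contains at most one copy in total from the items g_x and g_y; consequently, the set {u ∈ V : A_s contains at least one copy of g_u} is an independent set of G. -/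
open Finset

/-
If the special agent held two copies among `g_x, g_y` for an edge `e = xy`, then, since each
item is handed out once per round, the `2|V| + 1` agents of `e` would share at most
`2|V| - 2` copies of `g_x, g_y`, so one of them gets none and values her own bundle at `0`.
Removing one item from the special agent's bundle still leaves a copy of `g_x` or `g_y`,
worth `δ > 0` to her: EF1 fails.
-/

lemma sum_mult {α β : Type*} [Fintype α] [DecidableEq β] {T : ℕ}
    (A : Fin T → α ≃ β) (g : β) : ∑ i : α, mult A i g = T := by
  have hfiber : ∀ t, Finset.univ.filter (fun i => A t i = g) = {(A t).symm g} := by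
    intro t; ext i; simp [Equiv.eq_symm_apply]
  simp only [mult, Finset.card_filter]
  rw [Finset.sum_comm]
  simp only [← Finset.card_filter, hfiber, Finset.card_singleton, Finset.sum_const,
    Finset.card_univ, Fintype.card_fin, smul_eq_mul, mul_one]

lemma Fintype.exists_eq_zero_of_sum_lt_card {ι : Type*} [Fintype ι] (f : ι → ℕ)
    (h : ∑ i, f i < Fintype.card ι) : ∃ i, f i = 0 := by
  by_contra! hpos
  have := Finset.card_nsmul_le_sum Finset.univ f 1 fun i _ => Nat.one_le_iff_ne_zero.mpr (hpos i)
  simp only [Finset.card_univ, smul_eq_mul, mul_one] at this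
  exact h.not_ge this

lemma add_le_removeOne_add_removeOne_add_one {β : Type*} [DecidableEq β] (B : β → ℕ) (g : β)
    {a b : β} (hab : a ≠ b) : B a + B b ≤ removeOne B g a + removeOne B g b + 1 := by
  unfold removeOne
  split_ifs with ha hb hb
  · exact absurd (ha.trans hb.symm) hab
  all_goals omega

lemma bundleValue_graphVal_edgeAgent {V : Type*} [Fintype V] [DecidableEq V]
    {G : SimpleGraph V} [DecidableRel G.Adj] (δ : ℝ) (N : ℕ) {x y : V} (hxy : x ≠ y)
    (e : G.edgeFinset) (he : (e : Sym2 V) = s(x, y)) (i : Fin (2 * Fintype.card V + 1))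
    (B : V ⊕ Fin N → ℕ) :
    bundleValue (graphVal G δ N (Sum.inl (e, i))) B
      = δ * ((B (Sum.inl x) : ℝ) + B (Sum.inl y)) := by
  have hterm : ∀ u : V, (∑ t ∈ Finset.range (B (Sum.inl u)), graphVal G δ N (Sum.inl (e, i))
      (Sum.inl u) (t + 1)) = if u ∈ ({x, y} : Finset V) then δ * B (Sum.inl u) else 0 := by
    intro u
    simp only [graphVal, he, Sym2.mem_iff, Finset.mem_insert, Finset.mem_singleton]
    split_ifs <;> simp [mul_comm]
  rw [bundleValue, Fintype.sum_sum_type, Finset.sum_congr rfl fun u _ => hterm u]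
  simp only [graphVal, Finset.sum_const_zero, add_zero, Finset.sum_ite_mem, Finset.univ_inter,
    Finset.sum_pair hxy, mul_add]

lemma mult_special_add_le_one_of_adj {V : Type*} [Fintype V] [DecidableEq V]
    {G : SimpleGraph V} [DecidableRel G.Adj] {δ : ℝ} (hδ : 0 < δ) {N : ℕ}
    {A : Fin (Fintype.card V) →
      ((G.edgeFinset × Fin (2 * Fintype.card V + 1)) ⊕ Unit) ≃ (V ⊕ Fin N)}
    (hEF1 : EF1 (graphVal G δ N) A) {x y : V} (hxy : G.Adj x y) :
    mult A (Sum.inr ()) (Sum.inl x) + mult A (Sum.inr ()) (Sum.inl y) ≤ 1 := by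
  by_contra! hspecial
  let e : G.edgeFinset := ⟨s(x, y), G.mem_edgeFinset.mpr hxy⟩
  let F : (G.edgeFinset × Fin (2 * Fintype.card V + 1)) ⊕ Unit → ℕ :=
    fun a => mult A a (Sum.inl x) + mult A a (Sum.inl y)
  have htotal : ∑ a, F a = 2 * Fintype.card V := by
    simp only [F, Finset.sum_add_distrib, sum_mult]
    ring
  have hslice : ∑ i, F (Sum.inl (e, i)) + F (Sum.inr ()) ≤ ∑ a, F a := by
    rw [Fintype.sum_sum_type, Fintype.sum_prod_type, Fintype.univ_unit, Finset.sum_singleton]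
    gcongr
    exact Finset.single_le_sum (f := fun e' => ∑ i, F (Sum.inl (e', i)))
      (fun _ _ => Nat.zero_le _) (Finset.mem_univ e)
  obtain ⟨i, hi⟩ : ∃ i, F (Sum.inl (e, i)) = 0 :=
    Fintype.exists_eq_zero_of_sum_lt_card _ (by simp only [Fintype.card_fin]; omega)
  obtain ⟨g, hg⟩ := hEF1 (Sum.inl (e, i)) (Sum.inr ())
  have hne : (Sum.inl x : V ⊕ Fin N) ≠ Sum.inl y := Sum.inl_injective.ne hxy.ne
  have hrest : 1 ≤ removeOne (mult A (Sum.inr ())) g (Sum.inl x)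
      + removeOne (mult A (Sum.inr ())) g (Sum.inl y) := by
    have := add_le_removeOne_add_removeOne_add_one (mult A (Sum.inr ())) g hne
    omega
  rw [ge_iff_le, bundleValue_graphVal_edgeAgent δ N hxy.ne e rfl,
    bundleValue_graphVal_edgeAgent δ N hxy.ne e rfl, Nat.eq_zero_of_add_eq_zero_left hi,
    Nat.eq_zero_of_add_eq_zero_right hi] at hg
  have hrest_real : (1 : ℝ) ≤ removeOne (mult A (Sum.inr ())) g (Sum.inl x)
      + removeOne (mult A (Sum.inr ())) g (Sum.inl y) := by exact_mod_cast hrest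
  push_cast at hg
  nlinarith

theorem stmt11_general {V : Type*} [Fintype V] [DecidableEq V] (G : SimpleGraph V)
    [DecidableRel G.Adj]
    (δ : ℝ) (hδ0 : 0 < δ)
    (N : ℕ)
    (A : Fin (Fintype.card V) →
      ((G.edgeFinset × Fin (2 * Fintype.card V + 1)) ⊕ Unit) ≃ (V ⊕ Fin N))
    (hEF1 : EF1 (graphVal G δ N) A) :
    (∀ x y : V, G.Adj x y →
        mult A (Sum.inr ()) (Sum.inl x) + mult A (Sum.inr ()) (Sum.inl y) ≤ 1) ∧
    (∀ x y : V, 1 ≤ mult A (Sum.inr ()) (Sum.inl x) →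
        1 ≤ mult A (Sum.inr ()) (Sum.inl y) → ¬ G.Adj x y) := by
  refine ⟨fun x y hxy => mult_special_add_le_one_of_adj hδ0 hEF1 hxy, fun x y hx hy hxy => ?_⟩
  have := mult_special_add_le_one_of_adj hδ0 hEF1 hxy
  omega

/-- In every EF1 repeated matching of the instance `I(G)` constructed from a graph
`G` with no isolated vertices, the special agent gets at most one copy in total
from the two node items of any edge; consequently, the set of nodes whose node
item appears in the special agent's bundle is an independent set of `G`. -/
theorem stmt11 {V : Type*} [Fintype V] [DecidableEq V] (G : SimpleGraph V)
    [DecidableRel G.Adj]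
    (hiso : ∀ x : V, ∃ y : V, G.Adj x y)
    (δ : ℝ) (hδ0 : 0 < δ) (hδ1 : δ < 1 / (Fintype.card V : ℝ) ^ 2)
    (N : ℕ) (hN : N = (2 * Fintype.card V + 1) * G.edgeFinset.card + 1 - Fintype.card V)
    (A : Fin (Fintype.card V) →
      ((G.edgeFinset × Fin (2 * Fintype.card V + 1)) ⊕ Unit) ≃ (V ⊕ Fin N))
    (hEF1 : EF1 (graphVal G δ N) A) :
    (∀ x y : V, G.Adj x y →
        mult A (Sum.inr ()) (Sum.inl x) + mult A (Sum.inr ()) (Sum.inl y) ≤ 1) ∧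
    (∀ x y : V, 1 ≤ mult A (Sum.inr ()) (Sum.inl x) →
        1 ≤ mult A (Sum.inr ()) (Sum.inl y) → ¬ G.Adj x y) :=
  stmt11_general G δ hδ0 N A hEF1
end
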